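/- Let R̂(θ) be the 9×9 braid matrix of the N = 3 case and P the 9×9 permutation matrix with P((ab)⊗(cd))P = (cd)⊗(ab) (the flip on ℝ³⊗ℝ³). Define L⁺(θ) = R̂(θ)P, with 3×3 blocks L⁺_{ab}(θ) given by (L⁺_{ab}(θ))_{cd} = R̂(θ)_{ad,cb}. Then: L⁺_{22}(θ) = (22); L⁺_{12}(θ) + ε L⁺_{32}(θ) = e^{m₁₂^{(ε)}θ}((21)+ε(23)); L⁺_{21}(θ) + ε L⁺_{23}(θ) = e^{m₂₁^{(ε)}θ}((12)+ε(32)); L⁺_{11}(θ) + ε L⁺_{33}(θ) = e^{m₁₁^{(ε)}θ}((11)+ε(33)); L⁺_{13}(θ) + ε L⁺_{31}(θ) = e^{m₁₁^{(ε)}θ}((31)+ε(13)), for ε = ±1. -/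

import Mathlib

open Matrix

/-- The 9×9 braid matrix `R̂(θ)` of the `N = 3` case, written on the index set
`Fin 3 × Fin 3` (0-based pairs, ordered lexicographically as the rows/columns of
the 9×9 matrix).  Its nonzero entries sit on the diagonal and the antidiagonal:
`a₊,b₊,a₊,c₊,1,c₊,a₊,b₊,a₊` on the diagonal and `a₋,b₋,a₋,c₋,·,c₋,a₋,b₋,a₋` on
the antidiagonal, where
`a_±(θ) = (e^{m₁₁⁺θ} ± e^{m₁₁⁻θ})/2`, `b_±(θ) = (e^{m₁₂⁺θ} ± e^{m₁₂⁻θ})/2`,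
`c_±(θ) = (e^{m₂₁⁺θ} ± e^{m₂₁⁻θ})/2`. -/
noncomputable def Rhat (m11p m11m m12p m12m m21p m21m : ℝ) (θ : ℝ) :
    Matrix (Fin 3 × Fin 3) (Fin 3 × Fin 3) ℝ :=
  let aP : ℝ := (Real.exp (m11p*θ) + Real.exp (m11m*θ))/2
  let aM : ℝ := (Real.exp (m11p*θ) - Real.exp (m11m*θ))/2
  let bP : ℝ := (Real.exp (m12p*θ) + Real.exp (m12m*θ))/2
  let bM : ℝ := (Real.exp (m12p*θ) - Real.exp (m12m*θ))/2
  let cP : ℝ := (Real.exp (m21p*θ) + Real.exp (m21m*θ))/2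
  let cM : ℝ := (Real.exp (m21p*θ) - Real.exp (m21m*θ))/2
  fun x y =>
    if y = x then
      (if x = ((1, 1) : Fin 3 × Fin 3) then 1
       else if x.1 = 1 then cP else if x.2 = 1 then bP else aP)
    else if y = (2 - x.1, 2 - x.2) then
      (if x.1 = 1 then cM else if x.2 = 1 then bM else aM)
    else 0

/-- The flip (permutation) matrix `P` on `ℝ³ ⊗ ℝ³`: `P((ab)⊗(cd))P = (cd)⊗(ab)`. -/
def flip3 : Matrix (Fin 3 × Fin 3) (Fin 3 × Fin 3) ℝ :=
  fun x y => if x.1 = y.2 ∧ x.2 = y.1 then 1 else 0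

/-- `L⁺(θ) = R̂(θ)P`. -/
noncomputable def Lplus (m11p m11m m12p m12m m21p m21m θ : ℝ) :
    Matrix (Fin 3 × Fin 3) (Fin 3 × Fin 3) ℝ :=
  Rhat m11p m11m m12p m12m m21p m21m θ * flip3

/-- The 3×3 block `L⁺_{ab}(θ)` of `L⁺(θ)`, given by `(L⁺_{ab}(θ))_{cd} = R̂(θ)_{ad,cb}`
in the paper's component convention (`R̂_{ab,cd}` is the coefficient of `(ab)⊗(cd)`),
i.e. the standard Kronecker block: `(L⁺_{ab})_{cd} = L⁺_{(a,c),(b,d)}`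
(0-based indices: block `(a,b)` here is block `(a+1,b+1)` of the paper). -/
noncomputable def Lblock (m11p m11m m12p m12m m21p m21m θ : ℝ) (a b : Fin 3) :
    Matrix (Fin 3) (Fin 3) ℝ :=
  fun c d => Lplus m11p m11m m12p m12m m21p m21m θ (a, c) (b, d)

/-- sign `ε = ±1` encoded by a Boolean -/
def sgn (e : Bool) : ℝ := if e then 1 else -1

/-! Right multiplication by the flip `P` only permutes columns, so `(L⁺_{ab})_{cd}` is the single
entry `R̂_{(a,c),(d,b)}`. As `R̂` lives on the diagonal and the antidiagonal, each combination
`L⁺_{ab} + ε L⁺_{a'b'}` has two nonzero entries, of the form `x₊ + ε x₋` and `x₋ + ε x₊`;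
with `x_± = (e^{pθ} ± e^{qθ})/2` and `ε² = 1` these are `e^{m^{(ε)}θ}` and `ε e^{m^{(ε)}θ}`. -/

lemma mul_flip3_apply (M : Matrix (Fin 3 × Fin 3) (Fin 3 × Fin 3) ℝ) (x : Fin 3 × Fin 3)
    (b d : Fin 3) : (M * flip3) x (b, d) = M x (d, b) := by
  simp [Matrix.mul_apply, flip3, Fintype.sum_prod_type, ite_and]

lemma Lblock_apply (m11p m11m m12p m12m m21p m21m θ : ℝ) (a b c d : Fin 3) :
    Lblock m11p m11m m12p m12m m21p m21m θ a b c d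
      = Rhat m11p m11m m12p m12m m21p m21m θ (a, c) (d, b) :=
  mul_flip3_apply _ _ _ _

lemma add_div_two_add_sgn_mul_sub_div_two (x y : ℝ) (e : Bool) :
    (x + y) / 2 + sgn e * ((x - y) / 2) = if e then x else y := by
  cases e <;> simp only [sgn, Bool.false_eq_true, if_true, if_false] <;> ring

lemma sub_div_two_add_sgn_mul_add_div_two (x y : ℝ) (e : Bool) :
    (x - y) / 2 + sgn e * ((x + y) / 2) = (if e then x else y) * sgn e := by
  cases e <;> simp only [sgn, Bool.false_eq_true, if_true, if_false] <;> ring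

/-- The blocks of `L⁺(θ) = R̂(θ)P` for `N = 3`:
`L⁺₂₂ = (22)`, `L⁺₁₂ + εL⁺₃₂ = e^{m₁₂^{(ε)}θ}((21)+ε(23))`,
`L⁺₂₁ + εL⁺₂₃ = e^{m₂₁^{(ε)}θ}((12)+ε(32))`,
`L⁺₁₁ + εL⁺₃₃ = e^{m₁₁^{(ε)}θ}((11)+ε(33))`,
`L⁺₁₃ + εL⁺₃₁ = e^{m₁₁^{(ε)}θ}((31)+ε(13))`,
written with 0-based elementary matrices `stdBasisMatrix`. -/
theorem Lplus_blocks (m11p m11m m12p m12m m21p m21m θ : ℝ) (e : Bool) :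
    let Lb := Lblock m11p m11m m12p m12m m21p m21m θ
    let E : Fin 3 → Fin 3 → Matrix (Fin 3) (Fin 3) ℝ := fun a b => Matrix.single a b 1
    Lb 1 1 = E 1 1 ∧
    Lb 0 1 + sgn e • Lb 2 1
      = Real.exp ((if e then m12p else m12m) * θ) • (E 1 0 + sgn e • E 1 2) ∧
    Lb 1 0 + sgn e • Lb 1 2
      = Real.exp ((if e then m21p else m21m) * θ) • (E 0 1 + sgn e • E 2 1) ∧
    Lb 0 0 + sgn e • Lb 2 2
      = Real.exp ((if e then m11p else m11m) * θ) • (E 0 0 + sgn e • E 2 2) ∧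
    Lb 0 2 + sgn e • Lb 2 0
      = Real.exp ((if e then m11p else m11m) * θ) • (E 2 0 + sgn e • E 0 2) := by
  intro Lb E
  refine ⟨?_, ?_, ?_, ?_, ?_⟩ <;> ext c d <;> fin_cases c <;> fin_cases d <;>
    simp [Lb, E, Lblock_apply, Rhat, Matrix.single, Prod.ext_iff, Fin.ext_iff,
      add_div_two_add_sgn_mul_sub_div_two, sub_div_two_add_sgn_mul_add_div_two,
      apply_ite Real.exp]
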